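/- arXiv:2505.03015 — 2 statements merged into one kernel-verified Lean document; each statement's English description precedes it below -/
import Mathlib

section
/- For any ring R and positive integer n, the right singular ideal of the matrix ring M_n(R) equals the ring of n-by-n matrices over the right singular ideal of R, i.e., Z_r(M_n(R)) = M_n(Z_r(R)). -/
/-- A submodule is essential if it intersects every nonzero submodule nontrivially. -/
def Submodule.Essential {R M : Type*} [Ring R] [AddCommGroup M] [Module R M]
    (N : Submodule R M) : Prop :=
  ∀ K : Submodule R M, K ≠ ⊥ → N ⊓ K ≠ ⊥

/-- `N` is essential in `D`. -/
def Submodule.EssentialIn {R M : Type*} [Ring R] [AddCommGroup M] [Module R M]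
    (N D : Submodule R M) : Prop :=
  N ≤ D ∧ ∀ K : Submodule R M, K ≤ D → K ≠ ⊥ → N ⊓ K ≠ ⊥

/-- A submodule is fully invariant if every endomorphism maps it into itself. -/
def Submodule.FullyInvariant {R M : Type*} [Ring R] [AddCommGroup M] [Module R M]
    (N : Submodule R M) : Prop :=
  ∀ f : M →ₗ[R] M, N.map f ≤ N

/-- A module is FI-extending if every fully invariant submodule is essential
in a direct summand. -/
def IsFIExtending (R M : Type*) [Ring R] [AddCommGroup M] [Module R M] : Prop :=
  ∀ N : Submodule R M, N.FullyInvariant →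
    ∃ D D' : Submodule R M, IsCompl D D' ∧ N.EssentialIn D

/-- The right annihilator of a subset of a ring, as a right ideal
(submodule of `R` over `Rᵐᵒᵖ`). -/
def rightAnn (R : Type*) [Ring R] (S : Set R) : Submodule Rᵐᵒᵖ R where
  carrier := {x | ∀ s ∈ S, s * x = 0}
  add_mem' := by
    intro a b ha hb s hs
    rw [mul_add, ha s hs, hb s hs, add_zero]
  zero_mem' := by intro s hs; rw [mul_zero]
  smul_mem' := by
    intro c x hx s hs
    show s * (c • x) = 0
    rw [MulOpposite.smul_eq_mul_unop, ← mul_assoc, hx s hs, zero_mul]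

/-- The right singular ideal of a ring: elements whose right annihilator is an
essential right ideal. -/
def rightSingular (R : Type*) [Ring R] : Set R :=
  {r | (rightAnn R {r}).Essential}

/-- ACC on right annihilators: every ascending chain of right annihilator ideals
stabilizes. -/
def ACCRightAnnihilators (R : Type*) [Ring R] : Prop :=
  ∀ c : ℕ → Set R, (Monotone fun i => rightAnn R (c i)) →
    ∃ N, ∀ i, N ≤ i → rightAnn R (c i) = rightAnn R (c N)

/-- The endomorphism of `M₁ × M₂` given by a 2×2 matrix of homomorphisms. -/
def blockMap {R M1 M2 : Type*} [Ring R] [AddCommGroup M1] [AddCommGroup M2]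
    [Module R M1] [Module R M2] (e : M1 →ₗ[R] M1) (m : M2 →ₗ[R] M1)
    (n : M1 →ₗ[R] M2) (f : M2 →ₗ[R] M2) : (M1 × M2) →ₗ[R] (M1 × M2) :=
  ((e ∘ₗ LinearMap.fst R M1 M2) + (m ∘ₗ LinearMap.snd R M1 M2)).prod
    ((n ∘ₗ LinearMap.fst R M1 M2) + (f ∘ₗ LinearMap.snd R M1 M2))

section Aux

variable {S : Type*} [Ring S]

lemma mem_rightAnn_singleton {a x : S} : x ∈ rightAnn S {a} ↔ a * x = 0 := by
  constructor
  · intro h; exact h a rfl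
  · intro h s hs; rw [Set.mem_singleton_iff] at hs; rw [hs, h]

lemma essential_mono {N N' : Submodule Sᵐᵒᵖ S} (h : N ≤ N') (hN : N.Essential) :
    N'.Essential := by
  intro K hK hbot
  exact hN K hK (le_bot_iff.mp ((inf_le_inf_right K h).trans hbot.le))

lemma essential_inf {N N' : Submodule Sᵐᵒᵖ S} (hN : N.Essential) (hN' : N'.Essential) :
    (N ⊓ N').Essential := by
  intro K hK
  rw [inf_assoc]
  exact hN _ (hN' K hK)

lemma zero_mem_rightSingular : (0 : S) ∈ rightSingular S := by
  intro K hK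
  have : rightAnn S {(0:S)} = ⊤ := by
    ext x; simp [mem_rightAnn_singleton]
  rw [this, top_inf_eq]; exact hK

lemma add_mem_rightSingular {a b : S} (ha : a ∈ rightSingular S) (hb : b ∈ rightSingular S) :
    a + b ∈ rightSingular S := by
  refine essential_mono ?_ (essential_inf ha hb)
  intro x hx
  rw [Submodule.mem_inf] at hx
  rw [mem_rightAnn_singleton] at hx ⊢
  rw [mem_rightAnn_singleton] at hx
  rw [add_mul, hx.1, hx.2, add_zero]

lemma exists_mul_mem {T : Submodule Sᵐᵒᵖ S} (hT : T.Essential) {c : S} (hc : c ≠ 0) :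
    ∃ r : S, c * r ∈ T ∧ c * r ≠ 0 := by
  have hspan : Submodule.span Sᵐᵒᵖ {c} ≠ ⊥ := by
    intro h
    have : c ∈ (⊥ : Submodule Sᵐᵒᵖ S) := h ▸ Submodule.subset_span (Set.mem_singleton c)
    exact hc (Submodule.mem_bot _ |>.mp this)
  obtain ⟨x, hx, hx0⟩ := (Submodule.ne_bot_iff _).mp (hT _ hspan)
  rw [Submodule.mem_inf] at hx
  obtain ⟨m, hm⟩ := Submodule.mem_span_singleton.mp hx.2
  refine ⟨m.unop, ?_, ?_⟩
  · rw [show c * m.unop = x by rw [← hm, MulOpposite.smul_eq_mul_unop]]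
    exact hx.1
  · rw [show c * m.unop = x by rw [← hm, MulOpposite.smul_eq_mul_unop]]
    exact hx0

lemma mul_right_mem_rightSingular {a : S} (ha : a ∈ rightSingular S) (c : S) :
    a * c ∈ rightSingular S := by
  intro K hK
  rw [Submodule.ne_bot_iff]
  obtain ⟨k, hk, hk0⟩ := (Submodule.ne_bot_iff _).mp hK
  by_cases hck : c * k = 0
  · exact ⟨k, Submodule.mem_inf.mpr ⟨mem_rightAnn_singleton.mpr (by rw [mul_assoc, hck, mul_zero]), hk⟩, hk0⟩
  · obtain ⟨r, hr, hr0⟩ := exists_mul_mem ha hck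
    refine ⟨k * r, Submodule.mem_inf.mpr ⟨?_, ?_⟩, ?_⟩
    · rw [mem_rightAnn_singleton] at hr ⊢
      rw [mul_assoc, ← mul_assoc c, ← mul_assoc] at hr ⊢
      exact hr
    · simpa [MulOpposite.smul_eq_mul_unop] using K.smul_mem (MulOpposite.op r) hk
    · intro h
      exact hr0 (by rw [mul_assoc, h, mul_zero])

lemma mul_left_mem_rightSingular {a : S} (ha : a ∈ rightSingular S) (c : S) :
    c * a ∈ rightSingular S := by
  refine essential_mono ?_ ha
  intro x hx
  rw [mem_rightAnn_singleton] at hx ⊢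
  rw [mul_assoc, hx, mul_zero]

end Aux



section MatrixAux

variable {R : Type*} [Ring R] {n : ℕ}

open Matrix

/-- The right ideal of matrices whose `j`-th row has entries in `T`. -/
def rowSub (j : Fin n) (T : Submodule Rᵐᵒᵖ R) :
    Submodule (Matrix (Fin n) (Fin n) R)ᵐᵒᵖ (Matrix (Fin n) (Fin n) R) where
  carrier := {B | ∀ k, B j k ∈ T}
  add_mem' := by
    intro a b ha hb k
    exact T.add_mem (ha k) (hb k)
  zero_mem' := fun k => T.zero_mem
  smul_mem' := by
    intro C B hB
    intro k
    show (C • B) j k ∈ T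
    rw [MulOpposite.smul_eq_mul_unop, Matrix.mul_apply]
    refine Submodule.sum_mem T fun m _ => ?_
    simpa [MulOpposite.smul_eq_mul_unop] using
      T.smul_mem (MulOpposite.op (C.unop m k)) (hB m)

lemma rowSub_essential (j : Fin n) {T : Submodule Rᵐᵒᵖ R} (hT : T.Essential) :
    (rowSub j T).Essential := by
  intro K hK
  rw [Submodule.ne_bot_iff]
  obtain ⟨B, hB, hB0⟩ := (Submodule.ne_bot_iff _).mp hK
  by_cases hrow : ∀ q, B j q = 0
  · exact ⟨B, Submodule.mem_inf.mpr
      ⟨fun k => by rw [hrow k]; exact T.zero_mem, hB⟩, hB0⟩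
  · push_neg at hrow
    obtain ⟨q, hq⟩ := hrow
    obtain ⟨r, hr, hr0⟩ := exists_mul_mem hT hq
    refine ⟨B * Matrix.single q j r, Submodule.mem_inf.mpr ⟨?_, ?_⟩, ?_⟩
    · intro k
      by_cases hk : k = j
      · subst hk; rw [Matrix.mul_single_apply_same]; exact hr
      · rw [Matrix.mul_single_apply_of_ne r q j j k hk B]
        exact T.zero_mem
    · simpa [MulOpposite.smul_eq_mul_unop] using
        K.smul_mem (MulOpposite.op (Matrix.single q j r)) hB
    · intro h
      apply hr0
      have h2 := congrFun (congrFun h j) j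
      rwa [Matrix.mul_single_apply_same, Matrix.zero_apply] at h2

lemma stdBasis_mem_rightSingular {a : R} (i j : Fin n) (ha : a ∈ rightSingular R) :
    Matrix.single i j a ∈ rightSingular (Matrix (Fin n) (Fin n) R) := by
  refine essential_mono ?_ (rowSub_essential j ha)
  intro B hB
  rw [mem_rightAnn_singleton]
  ext p k
  rw [Matrix.zero_apply]
  by_cases hp : p = i
  · subst hp
    rw [Matrix.single_mul_apply_same]
    exact (hB k) a rfl
  · rw [Matrix.single_mul_apply_of_ne a i j p k hp B]

/-- The right ideal of matrices supported on row `i0` with entries in `J`. -/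
def onlyRow (i0 : Fin n) (J : Submodule Rᵐᵒᵖ R) :
    Submodule (Matrix (Fin n) (Fin n) R)ᵐᵒᵖ (Matrix (Fin n) (Fin n) R) where
  carrier := {B | (∀ k, B i0 k ∈ J) ∧ ∀ p k, p ≠ i0 → B p k = 0}
  add_mem' := by
    intro a b ha hb
    refine ⟨fun k => J.add_mem (ha.1 k) (hb.1 k), fun p k hp => ?_⟩
    show a p k + b p k = 0
    rw [ha.2 p k hp, hb.2 p k hp, add_zero]
  zero_mem' := ⟨fun k => J.zero_mem, fun p k _ => rfl⟩
  smul_mem' := by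
    intro C B hB
    constructor
    · intro k
      show (C • B) i0 k ∈ J
      rw [MulOpposite.smul_eq_mul_unop, Matrix.mul_apply]
      refine Submodule.sum_mem J fun m _ => ?_
      simpa [MulOpposite.smul_eq_mul_unop] using
        J.smul_mem (MulOpposite.op (C.unop m k)) (hB.1 m)
    · intro p k hp
      show (C • B) p k = 0
      rw [MulOpposite.smul_eq_mul_unop, Matrix.mul_apply]
      refine Finset.sum_eq_zero fun m _ => ?_
      rw [hB.2 p m hp, zero_mul]

lemma of_stdBasis_mem {a : R} (i0 : Fin n)
    (h : Matrix.single i0 i0 a ∈ rightSingular (Matrix (Fin n) (Fin n) R)) :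
    a ∈ rightSingular R := by
  intro J hJ
  rw [Submodule.ne_bot_iff]
  have hOR : onlyRow i0 J ≠ ⊥ := by
    obtain ⟨x, hx, hx0⟩ := (Submodule.ne_bot_iff _).mp hJ
    rw [Submodule.ne_bot_iff]
    refine ⟨Matrix.single i0 i0 x, ⟨?_, ?_⟩, ?_⟩
    · intro k
      by_cases hk : i0 = k
      · subst hk; rw [Matrix.single_apply_same]; exact hx
      · rw [Matrix.single_apply_of_ne i0 i0 x i0 k (fun hc => hk hc.2)]
        exact J.zero_mem
    · intro p k hp
      exact Matrix.single_apply_of_ne i0 i0 x p k (fun hc => hp hc.1.symm)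
    · intro hc
      apply hx0
      have := congrFun (congrFun hc i0) i0
      rwa [Matrix.single_apply_same, Matrix.zero_apply] at this
  obtain ⟨B, hB, hB0⟩ := (Submodule.ne_bot_iff _).mp (h _ hOR)
  rw [Submodule.mem_inf] at hB
  obtain ⟨hB1, hB2⟩ := hB
  have hex : ∃ q, B i0 q ≠ 0 := by
    by_contra hq
    push_neg at hq
    apply hB0
    ext p k
    rw [Matrix.zero_apply]
    by_cases hp : p = i0
    · subst hp; exact hq k
    · exact hB2.2 p k hp
  obtain ⟨q, hq⟩ := hex
  refine ⟨B i0 q, Submodule.mem_inf.mpr ⟨?_, hB2.1 q⟩, hq⟩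
  rw [mem_rightAnn_singleton]
  have h2 : (Matrix.single i0 i0 a * B) i0 q = (0 : Matrix (Fin n) (Fin n) R) i0 q := by
    rw [mem_rightAnn_singleton.mp hB1]
  rwa [Matrix.single_mul_apply_same, Matrix.zero_apply] at h2

end MatrixAux

/-- The right singular ideal of a matrix ring is the matrix ring over the
right singular ideal. -/
theorem rightSingular_matrix (R : Type*) [Ring R] (n : ℕ) (hn : 0 < n) :
    rightSingular (Matrix (Fin n) (Fin n) R) =
      {A : Matrix (Fin n) (Fin n) R | ∀ i j, A i j ∈ rightSingular R} := by
  ext A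
  simp only [Set.mem_setOf_eq]
  constructor
  · intro hA i j
    set i0 : Fin n := ⟨0, hn⟩
    have h1 : Matrix.single i0 i 1 * A * Matrix.single j i0 1
        ∈ rightSingular (Matrix (Fin n) (Fin n) R) :=
      mul_right_mem_rightSingular (mul_left_mem_rightSingular hA _) _
    have h2 : Matrix.single i0 i 1 * A * Matrix.single j i0 1 =
        Matrix.single i0 i0 (A i j) := by
      ext p k
      by_cases hp : p = i0
      · subst hp
        by_cases hk : k = i0
        · subst hk
          rw [Matrix.mul_single_apply_same,
            Matrix.single_mul_apply_same,
            Matrix.single_apply_same, one_mul, mul_one]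
        · rw [Matrix.mul_single_apply_of_ne 1 j i0 i0 k hk,
            Matrix.single_apply_of_ne i0 i0 (A i j) i0 k (fun hc => hk hc.2.symm)]
      · rw [Matrix.mul_apply]
        rw [Matrix.single_apply_of_ne i0 i0 (A i j) p k (fun hc => hp hc.1.symm)]
        refine Finset.sum_eq_zero fun m _ => ?_
        rw [Matrix.single_mul_apply_of_ne 1 i0 i p m hp, zero_mul]
    rw [h2] at h1
    exact of_stdBasis_mem i0 h1
  · intro hA
    rw [Matrix.matrix_eq_sum_single A]
    refine Finset.sum_induction _ (· ∈ rightSingular (Matrix (Fin n) (Fin n) R))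
      (fun a b => add_mem_rightSingular) zero_mem_rightSingular fun i _ => ?_
    refine Finset.sum_induction _ (· ∈ rightSingular (Matrix (Fin n) (Fin n) R))
      (fun a b => add_mem_rightSingular) zero_mem_rightSingular fun j _ => ?_
    exact stdBasis_mem_rightSingular i j (hA i j)
end

section
/- Let M be a right R-module, E an idempotent endomorphism of M, N a fully invariant submodule with N essential in E(M), and g an endomorphism of M such that g(x) = x for all x ∈ N and g(M) ⊆ E(M) componentwise in the sense that E∘g = g on N. If g is idempotent with N ⊆ g(M) ⊆ M, then N is essential in g(M). Concretely: with notation as in the main theorem, if N is essential in E(M) and h := diag(e^{2k+1}, f^{2k+1}) satisfies h(x) = x for all x ∈ N and h = diag(e^k,f^k)∘E∘diag(e^k,f^k), then N is essential in h(M). -/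
section RingAux
variable {A : Type*} [Ring A]

private lemma aux_geom (a : A) (k : ℕ) : ∃ q : A, Commute a q ∧ (1 - a) ^ k = 1 - a * q := by
  induction k with
  | zero => exact ⟨0, Commute.zero_right a, by simp⟩
  | succ k ih =>
    obtain ⟨q, hc, hq⟩ := ih
    refine ⟨1 + q - q * a, ?_, ?_⟩
    · exact ((Commute.one_right a).add_right hc).sub_right (hc.mul_right (Commute.refl a))
    · rw [pow_succ, hq]
      noncomm_ring

private lemma aux_pow (a : A) (k : ℕ) (hnil : (a - a ^ 2) ^ k = 0) :
    ∃ s : A, s * a ^ (3 * k + 2) = a ^ (2 * k + 1) := by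
  obtain ⟨q, hc, hq⟩ := aux_geom a k
  have hcomm : Commute a (1 - a) := (Commute.one_right a).sub_right (Commute.refl a)
  have h0 : a ^ k * (1 - a) ^ k = 0 := by
    rw [← hcomm.mul_pow]
    have : a * (1 - a) = a - a ^ 2 := by noncomm_ring
    rw [this, hnil]
  have hstep : a ^ k = a ^ (k + 1) * q := by
    rw [hq, mul_sub, mul_one, sub_eq_zero] at h0
    rw [h0, ← mul_assoc, ← pow_succ]
  have hiter : ∀ j, a ^ k = a ^ (k + j) * q ^ j := by
    intro j
    induction j with
    | zero => simp
    | succ j ih =>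
      calc a ^ k = a ^ (k + 1) * q := hstep
        _ = a * a ^ k * q := by rw [pow_succ']
        _ = a * (a ^ (k + j) * q ^ j) * q := by rw [← ih]
        _ = a ^ (k + (j + 1)) * q ^ (j + 1) := by
            rw [← mul_assoc, ← pow_succ', mul_assoc, ← pow_succ, Nat.add_assoc]
  refine ⟨q ^ (k + 1), ?_⟩
  have h1 : a ^ (2 * k + 1) = a ^ (k + 1) * a ^ k := by rw [← pow_add]; congr 1; omega
  have h2 : a ^ (k + 1) * (a ^ (k + (k + 1)) * q ^ (k + 1)) = a ^ (3 * k + 2) * q ^ (k + 1) := by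
    rw [← mul_assoc, ← pow_add]; congr 2; omega
  rw [h1, hiter (k + 1), h2, ((hc.symm).pow_pow (k + 1) (3 * k + 2))]

private lemma aux_annih (a : A) (k : ℕ) (hnil : (a - a ^ 2) ^ k = 0) :
    (1 - a) ^ k * a ^ (2 * k + 1) = 0 := by
  have hcomm : Commute a (1 - a) := (Commute.one_right a).sub_right (Commute.refl a)
  have h0 : (a * (1 - a)) ^ k = 0 := by
    have : a * (1 - a) = a - a ^ 2 := by noncomm_ring
    rw [this, hnil]
  calc (1 - a) ^ k * a ^ (2 * k + 1) = (1 - a) ^ k * a ^ k * a ^ (k + 1) := by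
        rw [mul_assoc, ← pow_add]
        have : k + (k + 1) = 2 * k + 1 := by omega
        rw [this]
    _ = a ^ k * (1 - a) ^ k * a ^ (k + 1) := by rw [← (hcomm.pow_pow k k).eq]
    _ = (a * (1 - a)) ^ k * a ^ (k + 1) := by rw [hcomm.mul_pow]
    _ = 0 := by rw [h0, zero_mul]

private lemma aux_annih' (a : A) (k : ℕ) (hnil : (a - a ^ 2) ^ k = 0) :
    a ^ k * (1 - a) ^ (2 * k + 1) = 0 := by
  have hnil' : ((1 - a) - (1 - a) ^ 2) ^ k = 0 := by
    have : (1 - a) - (1 - a) ^ 2 = a - a ^ 2 := by noncomm_ring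
    rw [this, hnil]
  have := aux_annih (1 - a) k hnil'
  simpa using this

end RingAux

section BlockAux
variable {R M1 M2 : Type*} [Ring R] [AddCommGroup M1] [AddCommGroup M2]
  [Module R M1] [Module R M2]

private lemma blockMap_apply (e : M1 →ₗ[R] M1) (m : M2 →ₗ[R] M1)
    (n : M1 →ₗ[R] M2) (f : M2 →ₗ[R] M2) (x : M1 × M2) :
    blockMap e m n f x = (e x.1 + m x.2, n x.1 + f x.2) := rfl

private lemma blockMap_comp (e e' : M1 →ₗ[R] M1) (m m' : M2 →ₗ[R] M1)
    (n n' : M1 →ₗ[R] M2) (f f' : M2 →ₗ[R] M2) :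
    blockMap e m n f ∘ₗ blockMap e' m' n' f' =
      blockMap (e ∘ₗ e' + m ∘ₗ n') (e ∘ₗ m' + m ∘ₗ f')
        (n ∘ₗ e' + f ∘ₗ n') (n ∘ₗ m' + f ∘ₗ f') := by
  apply LinearMap.ext
  intro x
  simp only [LinearMap.comp_apply, blockMap_apply, LinearMap.add_apply, map_add]
  rw [Prod.mk.injEq]
  constructor <;> abel

private lemma blockMap_ext_iff (e e' : M1 →ₗ[R] M1) (m m' : M2 →ₗ[R] M1)
    (n n' : M1 →ₗ[R] M2) (f f' : M2 →ₗ[R] M2) :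
    blockMap e m n f = blockMap e' m' n' f' ↔ e = e' ∧ m = m' ∧ n = n' ∧ f = f' := by
  constructor
  · intro hbe
    refine ⟨?_, ?_, ?_, ?_⟩
    · ext x
      have := congrArg Prod.fst (LinearMap.congr_fun hbe (x, 0))
      simpa [blockMap_apply] using this
    · ext y
      have := congrArg Prod.fst (LinearMap.congr_fun hbe (0, y))
      simpa [blockMap_apply] using this
    · ext x
      have := congrArg Prod.snd (LinearMap.congr_fun hbe (x, 0))
      simpa [blockMap_apply] using this
    · ext y
      have := congrArg Prod.snd (LinearMap.congr_fun hbe (0, y))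
      simpa [blockMap_apply] using this
  · rintro ⟨rfl, rfl, rfl, rfl⟩; rfl

end BlockAux

/-- With notation as in the main theorem, `N` is essential in `h(M)` where
`h = diag(e^(2k+1), f^(2k+1))`. -/
theorem essentialIn_range_h (R M1 M2 : Type*) [Ring R] [AddCommGroup M1]
    [AddCommGroup M2] [Module Rᵐᵒᵖ M1] [Module Rᵐᵒᵖ M2]
    (e : M1 →ₗ[Rᵐᵒᵖ] M1) (m : M2 →ₗ[Rᵐᵒᵖ] M1)
    (n : M1 →ₗ[Rᵐᵒᵖ] M2) (f : M2 →ₗ[Rᵐᵒᵖ] M2)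
    (hE : blockMap e m n f ∘ₗ blockMap e m n f = blockMap e m n f)
    (k : ℕ) (hk : 0 < k) (hmn : (m ∘ₗ n) ^ k = 0) (hnm : (n ∘ₗ m) ^ k = 0)
    (N : Submodule Rᵐᵒᵖ (M1 × M2)) (hN : N.FullyInvariant)
    (hess : N.EssentialIn (LinearMap.range (blockMap e m n f)))
    (h : (M1 × M2) →ₗ[Rᵐᵒᵖ] (M1 × M2))
    (hdef : h = blockMap (e ^ (2 * k + 1)) 0 0 (f ^ (2 * k + 1)))
    (hfix : ∀ x ∈ N, h x = x)
    (hconj : h = blockMap (e ^ k) 0 0 (f ^ k) ∘ₗ blockMap e m n f ∘ₗ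
      blockMap (e ^ k) 0 0 (f ^ k)) :
    N.EssentialIn (LinearMap.range h) := by
  -- component relations from idempotency of E
  rw [blockMap_comp, blockMap_ext_iff] at hE
  obtain ⟨r1, r2, r3, r4⟩ := hE
  have hee : (e ∘ₗ e : Module.End Rᵐᵒᵖ M1) = e ^ 2 := by rw [pow_two]; rfl
  have hff : (f ∘ₗ f : Module.End Rᵐᵒᵖ M2) = f ^ 2 := by rw [pow_two]; rfl
  have hMN : m ∘ₗ n = e - e ^ 2 := by
    rw [hee] at r1
    exact eq_sub_of_add_eq' r1
  have hNM : n ∘ₗ m = f - f ^ 2 := by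
    rw [hff] at r4
    exact eq_sub_of_add_eq r4
  have hEnil : ((e : Module.End Rᵐᵒᵖ M1) - e ^ 2) ^ k = 0 := by rw [← hMN]; exact hmn
  have hFnil : ((f : Module.End Rᵐᵒᵖ M2) - f ^ 2) ^ k = 0 := by rw [← hNM]; exact hnm
  -- interchange relations
  have stepEM : e ∘ₗ m = m ∘ₗ (1 - f) := by
    apply LinearMap.ext; intro y
    have h1 := LinearMap.congr_fun r2 y
    simp only [LinearMap.add_apply, LinearMap.comp_apply] at h1
    simp only [LinearMap.comp_apply, LinearMap.sub_apply, Module.End.one_apply, map_sub]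
    rw [eq_sub_iff_add_eq]
    exact h1
  have stepNE : (1 - f) ∘ₗ n = n ∘ₗ e := by
    apply LinearMap.ext; intro x
    have h1 := LinearMap.congr_fun r3 x
    simp only [LinearMap.add_apply, LinearMap.comp_apply] at h1
    simp only [LinearMap.comp_apply, LinearMap.sub_apply, Module.End.one_apply]
    rw [sub_eq_iff_eq_add, eq_comm, add_comm]
    rw [add_comm] at h1
    exact h1
  have hEM : ∀ j : ℕ, (e ^ j) ∘ₗ m = m ∘ₗ ((1 - f) ^ j) := fun j =>
    Module.End.commute_pow_left_of_commute stepEM j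
  have hNE : ∀ j : ℕ, n ∘ₗ (e ^ j) = ((1 - f) ^ j) ∘ₗ n := fun j =>
    (Module.End.commute_pow_left_of_commute stepNE j).symm
  -- the correcting diagonal maps
  obtain ⟨se, hse⟩ := aux_pow (e : Module.End Rᵐᵒᵖ M1) k hEnil
  obtain ⟨sf, hsf⟩ := aux_pow (f : Module.End Rᵐᵒᵖ M2) k hFnil
  set S : (M1 × M2) →ₗ[Rᵐᵒᵖ] (M1 × M2) := blockMap se 0 0 sf with hS
  set D : (M1 × M2) →ₗ[Rᵐᵒᵖ] (M1 × M2) := blockMap (e ^ k) 0 0 (f ^ k) with hDdef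
  set Eb : (M1 × M2) →ₗ[Rᵐᵒᵖ] (M1 × M2) := blockMap e m n f with hEb
  -- cross-term vanishing
  have z1 : (e ^ k) ∘ₗ (m ∘ₗ (f ^ (2 * k + 1))) = 0 := by
    rw [← LinearMap.comp_assoc, hEM k, LinearMap.comp_assoc]
    have h0 : ((1 - f) ^ k : Module.End Rᵐᵒᵖ M2) ∘ₗ (f ^ (2 * k + 1)) = 0 := by
      rw [← Module.End.mul_eq_comp]; exact aux_annih f k hFnil
    rw [h0, LinearMap.comp_zero]
  have z2 : (f ^ k) ∘ₗ (n ∘ₗ (e ^ (2 * k + 1))) = 0 := by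
    rw [hNE (2 * k + 1), ← LinearMap.comp_assoc]
    have h0 : ((f ^ k : Module.End Rᵐᵒᵖ M2)) ∘ₗ ((1 - f) ^ (2 * k + 1)) = 0 := by
      rw [← Module.End.mul_eq_comp]; exact aux_annih' f k hFnil
    rw [h0, LinearMap.zero_comp]
  -- diagonal operator identities
  have op1 : (se * (e ^ k * (e * e ^ (2 * k + 1))) : Module.End Rᵐᵒᵖ M1)
      = e ^ (2 * k + 1) := by
    rw [← pow_succ', ← pow_add]
    have harith : k + (2 * k + 1 + 1) = 3 * k + 2 := by omega
    rw [harith, hse]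
  have op2 : (sf * (f ^ k * (f * f ^ (2 * k + 1))) : Module.End Rᵐᵒᵖ M2)
      = f ^ (2 * k + 1) := by
    rw [← pow_succ', ← pow_add]
    have harith : k + (2 * k + 1 + 1) = 3 * k + 2 := by omega
    rw [harith, hsf]
  -- the key pointwise identity
  have key : ∀ y ∈ LinearMap.range h, S (D (Eb y)) = y := by
    rintro y ⟨u, rfl⟩
    rw [hdef]
    have t1 : (e ^ k) ((m ((f ^ (2 * k + 1)) u.2))) = 0 := by
      have := LinearMap.congr_fun z1 u.2
      simpa using this
    have t2 : (f ^ k) ((n ((e ^ (2 * k + 1)) u.1))) = 0 := by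
      have := LinearMap.congr_fun z2 u.1
      simpa using this
    have t3 : se ((e ^ k) (e ((e ^ (2 * k + 1)) u.1))) = (e ^ (2 * k + 1)) u.1 := by
      have := LinearMap.congr_fun op1 u.1
      simpa using this
    have t4 : sf ((f ^ k) (f ((f ^ (2 * k + 1)) u.2))) = (f ^ (2 * k + 1)) u.2 := by
      have := LinearMap.congr_fun op2 u.2
      simpa using this
    simp only [hS, hDdef, hEb, blockMap_apply, LinearMap.zero_apply, add_zero, zero_add,
      map_add, map_zero, t1, t2, Prod.mk.injEq]
    exact ⟨t3, t4⟩
  -- main argument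
  constructor
  · intro x hx
    exact ⟨x, hfix x hx⟩
  · intro K hK hKne
    obtain ⟨x, hxK, hx0⟩ := (Submodule.ne_bot_iff K).mp hKne
    have hKEne : K.map Eb ≠ ⊥ := by
      refine (Submodule.ne_bot_iff _).mpr ⟨Eb x, Submodule.mem_map_of_mem hxK, ?_⟩
      intro h0
      apply hx0
      have := key x (hK hxK)
      rw [h0, map_zero, map_zero] at this
      exact this.symm
    have hle : K.map Eb ≤ LinearMap.range (blockMap e m n f) := by
      rintro _ ⟨w, -, rfl⟩
      exact ⟨w, rfl⟩
    have hne := hess.2 (K.map Eb) hle hKEne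
    obtain ⟨z, hz, hz0⟩ := (Submodule.ne_bot_iff _).mp hne
    rw [Submodule.mem_inf] at hz
    obtain ⟨hzN, hzK⟩ := hz
    obtain ⟨y, hyK, rfl⟩ := hzK
    refine (Submodule.ne_bot_iff _).mpr ⟨y, Submodule.mem_inf.mpr ⟨?_, hyK⟩, ?_⟩
    · have h1 : D (Eb y) ∈ N := hN D (Submodule.mem_map_of_mem hzN)
      have h2 : S (D (Eb y)) ∈ N := hN S (Submodule.mem_map_of_mem h1)
      rwa [key y (hK hyK)] at h2
    · intro h0
      exact hz0 (by rw [h0, map_zero])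
end
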